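/- arXiv:1609.02526 — 3 statements merged into one kernel-verified Lean document; each statement's English description precedes it below -/
import Mathlib

section
/- Let m ≥ 6 be even and let k_2,…,k_m be positive natural numbers. Then 𝔉c([2, k_2, …, k_m]) = 𝔉([k_2 − 1, k_3, …, k_{m−1}, k_m − 1]) + 𝔉([k_3 − 1, k_4, …, k_{m−2}, k_{m−1} − 1]), where the right-hand sides are open-chain run-length fixed-point counts (a first or last run of length 0 corresponds to an empty block in the run-length encoding). -/
/-- The open-chain AND-OR network map determined by an operator list `ops`
(`true` = AND, `false` = OR), on `ops.length + 2` nodes. -/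
def chainMap (ops : List Bool) (x : Fin (ops.length + 2) → Bool) :
    Fin (ops.length + 2) → Bool := fun i =>
  if h0 : (i : ℕ) = 0 then x ⟨1, by omega⟩
  else if hn : (i : ℕ) = ops.length + 1 then x ⟨ops.length, by omega⟩
  else
    have hi : 1 ≤ (i : ℕ) ∧ (i : ℕ) ≤ ops.length := by
      have := i.isLt; omega
    if ops.get ⟨(i : ℕ) - 1, by omega⟩
    then x ⟨(i : ℕ) - 1, by omega⟩ && x ⟨(i : ℕ) + 1, by omega⟩
    else x ⟨(i : ℕ) - 1, by omega⟩ || x ⟨(i : ℕ) + 1, by omega⟩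

/-- `F ops` is the number of fixed points of the open-chain AND-OR network. -/
noncomputable def F (ops : List Bool) : ℕ :=
  Nat.card {x : Fin (ops.length + 2) → Bool // chainMap ops x = x}

/-- Run-length encoding: block `j` (1-based) consists of `k_j` copies of
`true` if `j` is odd and `false` if `j` is even. -/
def runOps : List ℕ → List Bool
  | [] => []
  | k :: t => List.replicate k true ++ (runOps t).map (fun b => !b)

/-- `Fr L` = 𝔉(L), the number of fixed points of the open-chain AND-OR
network with run-length list `L`. -/
noncomputable def Fr (L : List ℕ) : ℕ := F (runOps L)

/-- The closed-chain AND-OR network map on `ZMod n` determined by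
`ops : ZMod n → Bool` (`true` = AND, `false` = OR). -/
def cycleMap {n : ℕ} (ops : ZMod n → Bool) (x : ZMod n → Bool) :
    ZMod n → Bool := fun i =>
  if ops i then x (i - 1) && x (i + 1) else x (i - 1) || x (i + 1)

/-- `Fc ops` is the number of fixed points of the closed-chain AND-OR network. -/
noncomputable def Fc {n : ℕ} (ops : ZMod n → Bool) : ℕ :=
  Nat.card {x : ZMod n → Bool // cycleMap ops x = x}

/-- The cyclic operator assignment for run-length list `L`: going cyclically
from index `0`, a block of `k_j` consecutive values equal to `true` if `j` is
odd and `false` if `j` is even. -/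
def cOps (L : List ℕ) : ZMod L.sum → Bool :=
  fun i => (runOps L).getD i.val false

/-- `Frc L` = 𝔉c(L), the number of fixed points of the closed-chain AND-OR
network with run-length list `L`. -/
noncomputable def Frc (L : List ℕ) : ℕ := Fc (cOps L)

/-!
Split the fixed points `x` of the closed chain `[2, k₂, …, k_m]` by the value at node `0`, the
first of its two AND nodes.

If `x 0 = false`, then `x 1 = false`, and nodes `2, …, n - 1` form an open chain: its two end
nodes are OR nodes with a `false` outer neighbour, so they just copy their inner neighbour.
Negating (De Morgan) turns its interior operators into the run-length list
`[k₂ - 1, k₃, …, k_{m-1}, k_m - 1]`.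

If `x 0 = true`, the value `true` spreads from node `0` over both neighbouring OR runs `k₂` and
`k_m`, and the remaining nodes form an open chain whose end nodes are AND nodes with a `true`
outer neighbour, with interior operators `[k₃ - 1, k₄, …, k_{m-2}, k_{m-1} - 1]`.

In both cases the nodes outside the open chain are forced, and any fixed point of the open chain
extends to a fixed point of the closed one.
-/

def andOr (op l r : Bool) : Bool := if op then l && r else l || r

lemma andOr_not (op l r : Bool) : andOr (!op) (!l) (!r) = !andOr op l r := by
  cases op <;> cases l <;> cases r <;> rfl

lemma andOr_self_left (op r : Bool) : andOr op op r = r := by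
  cases op <;> cases r <;> rfl

lemma andOr_self_right (op l : Bool) : andOr op l op = l := by
  cases op <;> cases l <;> rfl

lemma andOr_idem (op v : Bool) : andOr op v v = v := by
  cases op <;> cases v <;> rfl

lemma andOr_absorb_left (c r : Bool) : andOr (!c) c r = c := by
  cases c <;> cases r <;> rfl

lemma andOr_absorb_right (c l : Bool) : andOr (!c) l c = c := by
  cases c <;> cases l <;> rfl

lemma chainMap_apply_zero (o : List Bool) (y : Fin (o.length + 2) → Bool) :
    chainMap o y ⟨0, by omega⟩ = y ⟨1, by omega⟩ := rfl

lemma chainMap_apply_last (o : List Bool) (y : Fin (o.length + 2) → Bool) :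
    chainMap o y ⟨o.length + 1, by omega⟩ = y ⟨o.length, by omega⟩ := by
  simp [chainMap]

lemma chainMap_apply_succ (o : List Bool) (y : Fin (o.length + 2) → Bool) {i : ℕ}
    (hi : i < o.length) :
    chainMap o y ⟨i + 1, by omega⟩ =
      andOr o[i] (y ⟨i, by omega⟩) (y ⟨i + 2, by omega⟩) := by
  simp [chainMap, andOr, hi.ne]

lemma chainMap_eq_self_iff (o : List Bool) (y : Fin (o.length + 2) → Bool) :
    chainMap o y = y ↔ y ⟨1, by omega⟩ = y ⟨0, by omega⟩ ∧
      y ⟨o.length, by omega⟩ = y ⟨o.length + 1, by omega⟩ ∧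
      ∀ i (hi : i < o.length),
        andOr o[i] (y ⟨i, by omega⟩) (y ⟨i + 2, by omega⟩) = y ⟨i + 1, by omega⟩ := by
  rw [funext_iff]
  constructor
  · intro h
    exact ⟨(chainMap_apply_zero o y).symm.trans (h _), (chainMap_apply_last o y).symm.trans (h _),
      fun i hi => (chainMap_apply_succ o y hi).symm.trans (h _)⟩
  · rintro ⟨h0, hL, hi⟩ ⟨_ | i, hk⟩
    · exact (chainMap_apply_zero o y).trans h0
    · by_cases hiL : i = o.length
      · subst hiL
        exact (chainMap_apply_last o y).trans hL
      · exact (chainMap_apply_succ o y (by omega)).trans (hi i (by omega))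

section Cycle

variable {N : ℕ}

lemma cycleMap_apply (op x : ZMod N → Bool) (i : ZMod N) :
    cycleMap op x i = andOr (op i) (x (i - 1)) (x (i + 1)) := rfl

lemma funext_iff_forall_add_natCast [NeZero N] {α : Type*} {f g : ZMod N → α} (p : ZMod N) :
    f = g ↔ ∀ t < N, f (p + t) = g (p + t) := by
  refine ⟨fun h t _ => h ▸ rfl, fun h => funext fun i => ?_⟩
  simpa using h (i - p).val (ZMod.val_lt _)

lemma add_natCast_sub_one {p : ZMod N} {t : ℕ} (ht : 1 ≤ t) :
    p + ((t - 1 : ℕ) : ZMod N) = p + t - 1 := by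
  push_cast [Nat.cast_sub ht]; ring

lemma add_natCast_add_one (p : ZMod N) (t : ℕ) :
    p + ((t + 1 : ℕ) : ZMod N) = p + t + 1 := by
  push_cast; ring

lemma add_natCast_pred_self (p : ZMod N) (hN : 1 ≤ N) : p + ((N - 1 : ℕ) : ZMod N) = p - 1 := by
  push_cast [Nat.cast_sub hN, ZMod.natCast_self]; ring

section Window

variable (op x : ZMod N → Bool) (p : ZMod N) (o : List Bool) (c : Bool)

/-- The nodes next to the window have operator `!c`, for which `c` is absorbing. -/
lemma cycleMap_apply_outside_window (hN : o.length + 4 ≤ N)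
    (hbefore : op (p - 1) = !c) (hafter : op (p + (o.length + 2 : ℕ)) = !c)
    (hx : ∀ t, o.length + 2 ≤ t → t < N → x (p + t) = c)
    {t : ℕ} (ht : o.length + 2 ≤ t) (htN : t < N) : cycleMap op x (p + t) = c := by
  have hright : t + 1 < N → x (p + t + 1) = c := fun h => by
    rw [← add_natCast_add_one]; exact hx _ (by omega) h
  rw [cycleMap_apply]
  by_cases hlast : t = N - 1
  · subst hlast
    rw [add_natCast_pred_self p (by omega), hbefore, ← add_natCast_pred_self p (by omega),
      ← add_natCast_sub_one (by omega), hx _ (by omega) (by omega)]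
    exact andOr_absorb_left c _
  have hleft : t = o.length + 2 ∨ x (p + t - 1) = c := by
    rcases Nat.lt_or_ge (o.length + 2) t with h | h
    · exact .inr (by rw [← add_natCast_sub_one (by omega)]; exact hx _ (by omega) (by omega))
    · exact .inl (by omega)
  rcases hleft with rfl | hleft
  · rw [hafter, hright (by omega)]
    exact andOr_absorb_right c _
  · rw [hleft, hright (by omega), andOr_idem]

/-- The end nodes `p` and `p + (o.length + 1)` of the window have operator `c`, so with the outer
neighbour equal to `c` they copy their inner neighbour, like the end nodes of an open chain. -/
lemma cycleMap_eq_self_iff_window (hN : o.length + 4 ≤ N)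
    (hop : ∀ i (hi : i < o.length), op (p + (i + 1 : ℕ)) = o[i])
    (hfirst : op p = c) (hlast : op (p + (o.length + 1 : ℕ)) = c)
    (hbefore : op (p - 1) = !c) (hafter : op (p + (o.length + 2 : ℕ)) = !c)
    (hx : ∀ t, o.length + 2 ≤ t → t < N → x (p + t) = c) :
    cycleMap op x = x ↔
      chainMap o (fun j => x (p + (j : ℕ))) =
        fun j : Fin (o.length + 2) => x (p + (j : ℕ)) := by
  have : NeZero N := ⟨by omega⟩
  have hprev : x (p - 1) = c := by
    rw [← add_natCast_pred_self p (by omega)]; exact hx _ (by omega) (by omega)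
  have hfirst_val : cycleMap op x p = x (p + 1) := by
    rw [cycleMap_apply, hfirst, hprev, andOr_self_left]
  have hlast_val : cycleMap op x (p + (o.length + 1 : ℕ)) = x (p + (o.length : ℕ)) := by
    rw [cycleMap_apply, hlast, ← add_natCast_add_one, hx _ le_rfl (by omega),
      add_natCast_add_one, add_sub_cancel_right, andOr_self_right]
  have hmid_val : ∀ i (hi : i < o.length), cycleMap op x (p + (i + 1 : ℕ)) =
      andOr o[i] (x (p + (i : ℕ))) (x (p + (i + 2 : ℕ))) := fun i hi => by
    rw [cycleMap_apply, hop i hi, add_natCast_add_one, add_sub_cancel_right,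
      ← add_natCast_add_one,
      ← add_natCast_add_one]
  rw [chainMap_eq_self_iff, funext_iff_forall_add_natCast p]
  dsimp only
  constructor
  · intro h
    refine ⟨?_, ?_, fun i hi => ?_⟩
    · simpa [hfirst_val] using h 0 (by omega)
    · rw [← hlast_val]; exact h _ (by omega)
    · rw [← hmid_val i hi]; exact h _ (by omega)
  · rintro ⟨h0, hL, hmid⟩ (_ | i) hi
    · simpa [hfirst_val] using h0
    · rcases lt_trichotomy i o.length with hiL | rfl | hiL
      · rw [hmid_val i hiL]; exact hmid i hiL
      · rw [hlast_val]; exact hL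
      · rw [cycleMap_apply_outside_window op x p o c hN hbefore hafter hx (by omega) hi,
          hx _ (by omega) hi]

end Window

def windowEquiv [NeZero N] {m : ℕ} (hm : m ≤ N) (p : ZMod N) (c : Bool) :
    {x : ZMod N → Bool // ∀ t, m ≤ t → t < N → x (p + t) = c} ≃ (Fin m → Bool) where
  toFun x j := x.1 (p + (j : ℕ))
  invFun y := ⟨fun i => if h : (i - p).val < m then y ⟨_, h⟩ else c, fun t ht htN => by
    simp [ZMod.val_natCast_of_lt htN, Nat.not_lt.2 ht]⟩
  left_inv x := Subtype.ext <| funext fun i => by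
    dsimp only
    split_ifs with h
    · simp
    · simpa using (x.2 _ (Nat.not_lt.1 h) (ZMod.val_lt _)).symm
  right_inv y := funext fun j => by
    simp [ZMod.val_natCast_of_lt (j.2.trans_le hm)]

lemma card_window [NeZero N] {m : ℕ} (hm : m ≤ N) (p : ZMod N) (c : Bool)
    (Q : (Fin m → Bool) → Prop) :
    Nat.card {x : ZMod N → Bool //
      (∀ t, m ≤ t → t < N → x (p + t) = c) ∧ Q (fun j => x (p + (j : ℕ)))} =
    Nat.card {y // Q y} :=
  Nat.card_congr <| (Equiv.subtypeSubtypeEquivSubtypeInter _ _).symm.trans <|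
    (windowEquiv hm p c).subtypeEquiv fun _ => Iff.rfl

lemma card_cycleMap_fixed_window (op : ZMod N → Bool) (p : ZMod N) (o : List Bool) (c : Bool)
    (hN : o.length + 4 ≤ N)
    (hop : ∀ i (hi : i < o.length), op (p + (i + 1 : ℕ)) = o[i])
    (hfirst : op p = c) (hlast : op (p + (o.length + 1 : ℕ)) = c)
    (hbefore : op (p - 1) = !c) (hafter : op (p + (o.length + 2 : ℕ)) = !c) :
    Nat.card {x // cycleMap op x = x ∧ ∀ t, o.length + 2 ≤ t → t < N → x (p + t) = c} =
      F o := by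
  have : NeZero N := ⟨by omega⟩
  rw [F, ← card_window (by omega) p c]
  refine Nat.card_congr <| Equiv.subtypeEquivRight fun x => ?_
  have key := cycleMap_eq_self_iff_window op x p o c hN hop hfirst hlast hbefore hafter
  exact ⟨fun h => ⟨h.2, (key h.2).1 h.1⟩, fun h => ⟨(key h.1).2 h.2, h.1⟩⟩

lemma cycleMap_fixed_run_right {op x : ZMod N → Bool} (hx : cycleMap op x = x) {q : ZMod N}
    {n : ℕ} {v : Bool} (hop : ∀ j, 1 ≤ j → j ≤ n → op (q + j) = !v) (hq : x q = v) :
    ∀ j ≤ n, x (q + j) = v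
  | 0, _ => by simpa using hq
  | j + 1, hj => by
    rw [← hx, cycleMap_apply, hop _ (by omega) hj, Nat.cast_succ, ← add_assoc,
      add_sub_cancel_right, cycleMap_fixed_run_right hx hop hq j (by omega), andOr_absorb_left]

lemma cycleMap_fixed_run_left {op x : ZMod N → Bool} (hx : cycleMap op x = x) {q : ZMod N}
    {n : ℕ} {v : Bool} (hop : ∀ j, 1 ≤ j → j ≤ n → op (q - j) = !v) (hq : x q = v) :
    ∀ j ≤ n, x (q - j) = v
  | 0, _ => by simpa using hq
  | j + 1, hj => by
    rw [← hx, cycleMap_apply, hop _ (by omega) hj, Nat.cast_succ, sub_add_eq_sub_sub,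
      sub_add_cancel, cycleMap_fixed_run_left hx hop hq j (by omega), andOr_absorb_right]

lemma cycleMap_fixed_spread_true {op x : ZMod N → Bool} (hx : cycleMap op x = x) {a c : ℕ}
    (hop0 : op 0 = true) (hopl : ∀ j, 1 ≤ j → j ≤ c → op (-j) = false)
    (hopr : ∀ j, 1 ≤ j → j ≤ a → op (1 + j) = false) (hx0 : x 0 = true) :
    (∀ j ≤ c, x (-j) = true) ∧ ∀ j ≤ a, x (1 + j) = true := by
  have hx1 : x 1 = true := by
    have h := congrFun hx 0
    rw [cycleMap_apply, hop0, hx0, zero_add] at h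
    simp only [andOr, if_true, Bool.and_eq_true] at h
    exact h.2
  refine ⟨fun j hj => ?_, cycleMap_fixed_run_right hx hopr hx1⟩
  simpa using cycleMap_fixed_run_left hx (q := 0) (by simpa using hopl) hx0 j hj

lemma card_cycleMap_fixed_zero_true_of_or_pair {op : ZMod N → Bool} {o : List Bool}
    (hN : N = o.length + 4) (hop0 : op 0 = false) (hop1 : op 1 = false) (hop2 : op 2 = true)
    (hop : ∀ i (hi : i < o.length), op ((i + 3 : ℕ) : ZMod N) = o[i])
    (hlast : op ((o.length + 3 : ℕ) : ZMod N) = true) :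
    Nat.card {x // cycleMap op x = x ∧ x 0 = true} = F o := by
  have hN0 : (2 : ZMod N) + ((o.length + 2 : ℕ) : ZMod N) = 0 := by
    have : ((o.length + 4 : ℕ) : ZMod N) = 0 := by rw [← hN]; exact ZMod.natCast_self N
    push_cast at this ⊢
    linear_combination this
  rw [← card_cycleMap_fixed_window op 2 o true (by omega)
    (fun i hi => by rw [← hop i hi]; push_cast; ring_nf) hop2
    (by rw [← hlast]; push_cast; ring_nf) (by rw [show (2 : ZMod N) - 1 = 1 by ring, hop1]; rfl)
    (by rw [hN0, hop0]; rfl)]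
  refine Nat.card_congr (Equiv.subtypeEquivRight fun x => and_congr_right fun hx => ?_)
  refine ⟨fun hx0 t ht htN => ?_, fun h => hN0 ▸ h _ le_rfl (by omega)⟩
  obtain rfl | rfl : t = o.length + 2 ∨ t = o.length + 3 := by omega
  · rwa [hN0]
  · have hx1 := cycleMap_fixed_run_right hx (q := 0) (n := 1) (fun j hj hj' => by
      obtain rfl : j = 1 := by omega
      simpa using hop1) hx0 1 le_rfl
    rwa [show (2 : ZMod N) + ((o.length + 3 : ℕ) : ZMod N) = 0 + ((1 : ℕ) : ZMod N) by
      push_cast at hN0 ⊢; linear_combination hN0]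

lemma card_cycleMap_fixed_zero_true_of_and_pair {op : ZMod N → Bool} {o : List Bool} {a c : ℕ}
    (hN : N = a + c + o.length + 4) (ha : 1 ≤ a) (hc : 1 ≤ c) (hop0 : op 0 = true)
    (hor : ∀ k : ℕ, 2 ≤ k ∧ k < a + 2 ∨ a + o.length + 4 ≤ k ∧ k < N → op k = false)
    (hfirst : op ((a + 2 : ℕ) : ZMod N) = true)
    (hop : ∀ i (hi : i < o.length), op ((a + 3 + i : ℕ) : ZMod N) = o[i])
    (hlast : op ((a + o.length + 3 : ℕ) : ZMod N) = true) :
    Nat.card {x // cycleMap op x = x ∧ x 0 = true} = F o := by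
  have hNcast : (N : ZMod N) = 0 := ZMod.natCast_self N
  have hp : ∀ t, ((a + 2 : ℕ) : ZMod N) + (t : ℕ) = ((a + 2 + t : ℕ) : ZMod N) := by
    intro t; push_cast; ring
  rw [← card_cycleMap_fixed_window op _ o true (by omega)
    (fun i hi => by rw [hp, ← hop i hi]; ring_nf) hfirst (by rw [hp, ← hlast]; ring_nf)
    (by rw [show ((a + 2 : ℕ) : ZMod N) - 1 = ((a + 1 : ℕ) : ZMod N) by push_cast; ring]
        exact hor _ (by omega))
    (by rw [hp]; exact hor _ (by omega))]
  refine Nat.card_congr (Equiv.subtypeEquivRight fun x => and_congr_right fun hx => ?_)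
  have hzero : ((a + 2 : ℕ) : ZMod N) + ((c + o.length + 2 : ℕ) : ZMod N) = 0 := by
    rw [← hNcast, hN]; push_cast; ring
  refine ⟨fun hx0 t ht htN => ?_, fun h => hzero ▸ h _ (by omega) (by omega)⟩
  obtain ⟨hleft, hright⟩ := cycleMap_fixed_spread_true hx (a := a) (c := c) hop0
    (fun j hj hj' => by
      rw [show -(j : ZMod N) = ((N - j : ℕ) : ZMod N) by
        rw [Nat.cast_sub (by omega), hNcast, zero_sub]]
      exact hor _ (by omega))
    (fun j hj hj' => by
      rw [show (1 : ZMod N) + j = ((1 + j : ℕ) : ZMod N) by push_cast; rfl]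
      exact hor _ (by omega)) hx0
  rw [hp]
  rcases Nat.lt_or_ge (a + 2 + t) N with h | h
  · have := hleft (N - (a + 2 + t)) (by omega)
    rwa [Nat.cast_sub h.le, hNcast, zero_sub, neg_neg] at this
  · obtain ⟨r, hr⟩ : ∃ r, a + 2 + t = N + r := ⟨_, (Nat.add_sub_cancel' h).symm⟩
    rw [hr, Nat.cast_add, hNcast, zero_add]
    rcases r with _ | r
    · simpa using hx0
    · rw [Nat.cast_succ, add_comm]
      exact hright r (by omega)

lemma Fc_eq_card_add_card [NeZero N] (op : ZMod N → Bool) :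
    Fc op = Nat.card {x // cycleMap op x = x ∧ x 0 = true} +
      Nat.card {x // cycleMap op x = x ∧ x 0 = false} := by
  rw [Fc, ← Nat.card_congr (Equiv.sumCompl fun x : {x // cycleMap op x = x} => x.1 0 = true),
    Nat.card_sum]
  congr 1
  · exact Nat.card_congr <|
      Equiv.subtypeSubtypeEquivSubtypeInter (fun x => cycleMap op x = x) (· 0 = true)
  · simp only [Bool.not_eq_true]
    exact Nat.card_congr <|
      Equiv.subtypeSubtypeEquivSubtypeInter (fun x => cycleMap op x = x) (· 0 = false)

lemma card_cycleMap_fixed_false (op : ZMod N → Bool) :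
    Nat.card {x // cycleMap op x = x ∧ x 0 = false} =
      Nat.card {x // cycleMap (fun i => !op i) x = x ∧ x 0 = true} := by
  refine Nat.card_congr <| (Equiv.arrowCongr (.refl _) Equiv.boolNot).subtypeEquiv fun x => ?_
  have hnot : cycleMap (fun i => !op i) (fun i => !x i) = fun i => !cycleMap op x i :=
    funext fun i => andOr_not _ _ _
  simp [Equiv.arrowCongr, Function.comp_def, hnot, funext_iff]

end Cycle

lemma runOps_length (L : List ℕ) : (runOps L).length = L.sum := by
  induction L with
  | nil => rfl
  | cons k t ih => simp [runOps, ih]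

lemma runOps_concat (L : List ℕ) (v : ℕ) :
    runOps (L ++ [v]) = runOps L ++ List.replicate v (decide (Even L.length)) := by
  induction L with
  | nil => simp [runOps]
  | cons k t ih => simp [runOps, ih, Nat.even_add_one, -Nat.not_even_iff_odd]

lemma runOps_cons_concat {K : List ℕ} (hK : Odd K.length) (a c : ℕ) :
    runOps (a :: K ++ [c]) =
      List.replicate a true ++ (runOps K).map not ++ List.replicate c true := by
  simp [runOps, runOps_concat, Nat.not_even_iff_odd.2 hK]

lemma runOps_two_cons_concat {K : List ℕ} (hK : Odd K.length) (a c : ℕ) :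
    runOps (2 :: a :: K ++ [c]) =
      List.replicate 2 true ++ List.replicate a false ++ runOps K ++ List.replicate c false := by
  rw [List.cons_append, runOps, runOps_cons_concat hK]
  simp [Function.comp_def]

lemma cOps_natCast (L : List ℕ) {k : ℕ} (hk : k < L.sum) :
    cOps L k = (runOps L)[k]'(by rwa [runOps_length]) := by
  simp [cOps, ZMod.val_natCast_of_lt hk,
    List.getElem?_eq_getElem (by rwa [runOps_length] : k < (runOps L).length)]

lemma card_fixed_cOps_zero_false {K : List ℕ} (hK : Odd K.length) (a c : ℕ) :
    Nat.card {x // cycleMap (cOps (2 :: (a + 1) :: K ++ [c + 1])) x = x ∧ x 0 = false} =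
      Fr (a :: K ++ [c]) := by
  rw [card_cycleMap_fixed_false, Fr]
  set o := runOps (a :: K ++ [c])
  have hN : (2 :: (a + 1) :: K ++ [c + 1]).sum = o.length + 4 := by
    simp [o, runOps_length]; omega
  have hdual : (runOps (2 :: (a + 1) :: K ++ [c + 1])).map not =
      [false, false, true] ++ o ++ [true] := by
    rw [runOps_two_cons_concat hK]
    simp [o, runOps_cons_concat hK, List.replicate_succ (n := a), List.replicate_succ' (n := c)]
  have hop : ∀ k (hk : k < o.length + 4), (!cOps (2 :: (a + 1) :: K ++ [c + 1]) k) =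
      ([false, false, true] ++ o ++ [true])[k]'(by simp; omega) := fun k hk => by
    rw [cOps_natCast _ (by omega), ← List.getElem_map not
      (h := by rw [List.length_map, runOps_length]; omega)]
    exact List.getElem_of_eq hdual _
  have hop0 := hop 0 (by omega)
  have hop1 := hop 1 (by omega)
  have hop2 := hop 2 (by omega)
  rw [Nat.cast_zero] at hop0
  rw [Nat.cast_one] at hop1
  rw [Nat.cast_ofNat] at hop2
  exact card_cycleMap_fixed_zero_true_of_or_pair hN hop0 hop1 hop2
    (fun i hi => by rw [hop _ (by omega)]; simp [hi]) (by rw [hop _ (by omega)]; simp)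

lemma card_fixed_cOps_zero_true {M : List ℕ} (hM : Odd M.length) {a c : ℕ} (ha : 1 ≤ a)
    (hc : 1 ≤ c) (b d : ℕ) :
    Nat.card {x // cycleMap (cOps (2 :: a :: (b + 1) :: M ++ [d + 1, c])) x = x ∧ x 0 = true} =
      Fr (b :: M ++ [d]) := by
  rw [Fr]
  set o := runOps (b :: M ++ [d])
  have hN : (2 :: a :: (b + 1) :: M ++ [d + 1, c]).sum = a + c + o.length + 4 := by
    simp [o, runOps_length]; omega
  set O := List.replicate 2 true ++ List.replicate a false ++ [true] ++ o ++ [true] ++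
    List.replicate c false
  have hO : runOps (2 :: a :: (b + 1) :: M ++ [d + 1, c]) = O := by
    rw [show 2 :: a :: (b + 1) :: M ++ [d + 1, c] = 2 :: a :: ((b + 1) :: M ++ [d + 1]) ++ [c] by
      simp, runOps_two_cons_concat (by simpa using hM.add_one.add_one), runOps_cons_concat hM]
    simp [O, o, runOps_cons_concat hM, List.replicate_succ (n := b), List.replicate_succ' (n := d)]
  have hop : ∀ k (hk : k < a + c + o.length + 4),
      cOps (2 :: a :: (b + 1) :: M ++ [d + 1, c]) k = O[k]'(by simp [O]; omega) := fun k hk => by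
    rw [cOps_natCast _ (by omega)]
    exact List.getElem_of_eq hO _
  have hOT : ∀ k (hk : k = 0 ∨ k = a + 2 ∨ k = a + o.length + 3),
      O[k]'(by simp [O]; omega) = true := by
    intro k hk
    simp only [O, List.getElem_append, List.length_append, List.length_replicate,
      List.getElem_replicate, List.length_singleton, List.getElem_singleton]
    split_ifs <;> first | rfl | omega
  refine card_cycleMap_fixed_zero_true_of_and_pair hN ha hc
    (by rw [← Nat.cast_zero, hop 0 (by omega), hOT 0 (by omega)]) (fun k hk => ?_)
    (by rw [hop _ (by omega), hOT _ (by omega)]) (fun i hi => ?_)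
    (by rw [hop _ (by omega), hOT _ (by omega)])
  all_goals
    rw [hop _ (by omega)]
    simp only [O, List.getElem_append, List.length_append, List.length_replicate,
      List.getElem_replicate, List.length_singleton, List.getElem_singleton]
    split_ifs <;> first | rfl | omega | (congr 1; omega)

/-- Here `2 :: a :: b :: M ++ [d, c]` is `[2, k₂, …, k_m]` with `a = k₂`, `b = k₃`,
`M = [k₄, …, k_{m-2}]`, `d = k_{m-1}` and `c = k_m`. -/
theorem andor_closed_chain_recursion_two_general (a b c d : ℕ) (M : List ℕ)
    (ha : 1 ≤ a) (hb : 1 ≤ b) (hc : 1 ≤ c) (hd : 1 ≤ d)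
    (hModd : Odd M.length) :
    Frc (2 :: a :: b :: M ++ [d, c]) =
      Fr ((a - 1) :: b :: M ++ [d, c - 1]) + Fr ((b - 1) :: M ++ [d - 1]) := by
  obtain ⟨a, rfl⟩ := Nat.exists_eq_add_of_le' ha
  obtain ⟨b, rfl⟩ := Nat.exists_eq_add_of_le' hb
  obtain ⟨c, rfl⟩ := Nat.exists_eq_add_of_le' hc
  obtain ⟨d, rfl⟩ := Nat.exists_eq_add_of_le' hd
  have hfalse := card_fixed_cOps_zero_false (K := (b + 1) :: M ++ [d + 1])
    (by simpa using hModd.add_one.add_one) a c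
  rw [show 2 :: (a + 1) :: ((b + 1) :: M ++ [d + 1]) ++ [c + 1] =
    2 :: (a + 1) :: (b + 1) :: M ++ [d + 1, c + 1] by simp] at hfalse
  have : NeZero (2 :: (a + 1) :: (b + 1) :: M ++ [d + 1, c + 1]).sum := ⟨by simp⟩
  rw [Frc, Fc_eq_card_add_card, add_comm, hfalse,
    card_fixed_cOps_zero_true hModd (by omega) (by omega)]
  simp

/-- for `m ≥ 6` even and the closed-chain run-length list
`[2, k₂, …, k_m]` (here written `2 :: a :: b :: M ++ [d, c]`, with
`a = k₂`, `b = k₃`, `M = [k₄, …, k_{m-2}]`, `d = k_{m-1}`, `c = k_m`),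
`𝔉c([2,k₂,…,k_m]) = 𝔉(k₂-1,k₃,…,k_{m-1},k_m-1) + 𝔉(k₃-1,k₄,…,k_{m-2},k_{m-1}-1)`. -/
theorem andor_closed_chain_recursion_two (a b c d : ℕ) (M : List ℕ)
    (ha : 1 ≤ a) (hb : 1 ≤ b) (hc : 1 ≤ c) (hd : 1 ≤ d)
    (hM : ∀ k ∈ M, 1 ≤ k) (hMlen : 1 ≤ M.length) (hModd : Odd M.length) :
    Frc (2 :: a :: b :: M ++ [d, c]) =
      Fr ((a - 1) :: b :: M ++ [d, c - 1]) + Fr ((b - 1) :: M ++ [d - 1]) :=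
  andor_closed_chain_recursion_two_general a b c d M ha hb hc hd hModd
end

section
/- For the closed-chain run-length fixed-point counts: 𝔉c([k]) = 2 for every k ≥ 3 (the closed chain all of whose operators are equal has exactly two fixed points); 𝔉c([k, 1]) = 2 for every k ≥ 2; and 𝔉c([k_1, k_2]) = 3 for all k_1, k_2 ≥ 2. -/
/-!
In a fixed point, an AND node that is on forces both neighbours on and an OR node that is off
forces both neighbours off; hence two adjacent nodes carrying the same operator have the same
value, and a fixed point is constant on every run of equal operators. With a single run only the
two constant states remain. With an AND run `[0, k)` followed by an OR run `[k, n)`, a fixed point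
is determined by its values `a` on the first run and `b` on the second. The AND node `0` sees the
OR run, which forces `a ≤ b`; if the OR run is a single node, that node sees only the AND run, which
forces `b = a`. If both runs have length at least two, the state `a = false, b = true` (the negated
operator pattern) is fixed as well, since then every node has a neighbour in its own run.
-/

section CycleMap

variable {n : ℕ}

theorem cycleMap_const (ops : ZMod n → Bool) (b : Bool) :
    cycleMap ops (fun _ => b) = fun _ => b := by
  funext i; simp [cycleMap]

theorem apply_add_one_eq_of_fixed {ops x : ZMod n → Bool} (hx : cycleMap ops x = x) {i : ZMod n}
    (h : ops (i + 1) = ops i) : x (i + 1) = x i := by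
  have hi := congrFun hx i
  have hi' := congrFun hx (i + 1)
  simp only [cycleMap, add_sub_cancel_right, h] at hi hi'
  revert hi hi'
  cases ops i <;> cases x (i - 1) <;> cases x i <;> cases x (i + 1) <;> cases x (i + 1 + 1) <;>
    decide

theorem apply_add_eq_of_fixed_of_run {ops x : ZMod n → Bool} (hx : cycleMap ops x = x)
    {a : ZMod n} {m : ℕ} (hrun : ∀ j < m, ops (a + j) = ops a) :
    ∀ j < m, x (a + j) = x a := by
  intro j hj
  induction j with
  | zero => simp
  | succ j ih =>
    rw [Nat.cast_succ, ← add_assoc, apply_add_one_eq_of_fixed hx, ih (by omega)]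
    rw [add_assoc, ← Nat.cast_succ, hrun _ hj, hrun _ (by omega)]

theorem Fc_eq_two_of_fixed_const {ops : ZMod n → Bool}
    (h : ∀ x, cycleMap ops x = x → ∀ i, x i = x 0) : Fc ops = 2 := by
  let e : {x // cycleMap ops x = x} ≃ Bool :=
    { toFun := fun x => x.1 0
      invFun := fun b => ⟨fun _ => b, cycleMap_const ops b⟩
      left_inv := fun x => Subtype.ext (funext fun i => (h x.1 x.2 i).symm)
      right_inv := fun _ => rfl }
  rw [Fc, Nat.card_congr e, Nat.card_eq_fintype_card, Fintype.card_bool]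

theorem Fc_const [NeZero n] (b : Bool) : Fc (fun _ : ZMod n => b) = 2 :=
  Fc_eq_two_of_fixed_const fun x hx i => by
    simpa using apply_add_eq_of_fixed_of_run hx (a := 0) (fun _ _ => rfl) i.val i.val_lt

end CycleMap

def twoBlock (n k : ℕ) (a b : Bool) : ZMod n → Bool := fun i => if i.val < k then a else b

section TwoBlock

variable {n k : ℕ}

theorem twoBlock_self (a : Bool) : twoBlock n k a a = fun _ => a := by
  funext i; simp [twoBlock]

theorem twoBlock_natCast {m : ℕ} (hm : m < n) (a b : Bool) :
    twoBlock n k a b m = if m < k then a else b := by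
  simp [twoBlock, ZMod.val_cast_of_lt hm]

variable [NeZero n] {x : ZMod n → Bool}

theorem eq_twoBlock_of_fixed (hx : cycleMap (twoBlock n k true false) x = x) :
    x = twoBlock n k (x 0) (x k) := by
  funext i
  obtain ⟨v, hv, rfl⟩ : ∃ v < n, (v : ZMod n) = i := ⟨i.val, i.val_lt, i.natCast_zmod_val⟩
  rw [twoBlock_natCast hv]
  split_ifs with hvk
  · have hrun : ∀ j < v + 1, twoBlock n k true false (0 + j) = twoBlock n k true false 0 := by
      intro j hj
      rw [zero_add, twoBlock_natCast (by omega), ← Nat.cast_zero, twoBlock_natCast (by omega)]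
      simp [show j < k by omega, show 0 < k by omega]
    simpa using apply_add_eq_of_fixed_of_run hx hrun v (by omega)
  · have hrun : ∀ j < n - k, twoBlock n k true false (k + j) = twoBlock n k true false k := by
      intro j hj
      rw [← Nat.cast_add, twoBlock_natCast (by omega), twoBlock_natCast (by omega)]
      simp
    have hxv := apply_add_eq_of_fixed_of_run hx hrun (v - k) (by omega)
    rwa [← Nat.cast_add, Nat.add_sub_cancel' (by omega)] at hxv

theorem apply_zero_le_of_fixed (hk : 0 < k) (hkn : k < n)
    (hx : cycleMap (twoBlock n k true false) x = x) : x 0 ≤ x k := by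
  have hneg : x (-1) = x k := by
    have e : ((n - 1 : ℕ) : ZMod n) = -1 := by
      rw [Nat.cast_pred (NeZero.pos n), ZMod.natCast_self, zero_sub]
    rw [congrFun (eq_twoBlock_of_fixed hx) (-1), ← e, twoBlock_natCast (by omega),
      if_neg (by omega)]
  have h0 := congrFun hx 0
  simp only [cycleMap, twoBlock, ZMod.val_zero, hk, if_true, zero_sub, zero_add, hneg] at h0
  rw [← h0]
  cases x k <;> cases x 1 <;> decide

theorem cycleMap_twoBlock_false_true (hk : 2 ≤ k) (hkn : k + 2 ≤ n) :
    cycleMap (twoBlock n k true false) (twoBlock n k false true) = twoBlock n k false true := by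
  funext i
  obtain ⟨v, hv, rfl⟩ : ∃ v < n, (v : ZMod n) = i := ⟨i.val, i.val_lt, i.natCast_zmod_val⟩
  have hsucc : (v : ZMod n) + 1 = ((v + 1 : ℕ) : ZMod n) := (Nat.cast_succ v).symm
  simp only [cycleMap, twoBlock_natCast hv]
  by_cases hvk : v < k
  · simp only [hvk, if_true]
    rcases v with _ | w
    · rw [hsucc, twoBlock_natCast (by omega), if_pos (by omega), Bool.and_false]
    · rw [Nat.cast_succ, add_sub_cancel_right, twoBlock_natCast (by omega), if_pos (by omega),
        Bool.false_and]
  · simp only [hvk, if_false, Bool.false_eq_true]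
    by_cases hlast : v + 1 < n
    · rw [hsucc, twoBlock_natCast hlast, if_neg (show ¬v + 1 < k by omega), Bool.or_true]
    · obtain ⟨w, rfl⟩ : ∃ w, v = w + 1 := ⟨v - 1, by omega⟩
      rw [Nat.cast_succ, add_sub_cancel_right, twoBlock_natCast (by omega),
        if_neg (show ¬w < k by omega), Bool.true_or]

theorem cycleMap_twoBlock_of_le (hk : 2 ≤ k) (hkn : k + 2 ≤ n) {a b : Bool} (hab : a ≤ b) :
    cycleMap (twoBlock n k true false) (twoBlock n k a b) = twoBlock n k a b := by
  obtain rfl | ⟨rfl, rfl⟩ : a = b ∨ a = false ∧ b = true := by revert a b; decide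
  · rw [twoBlock_self]; exact cycleMap_const _ _
  · exact cycleMap_twoBlock_false_true hk hkn

theorem Fc_twoBlock (hk : 2 ≤ k) (hkn : k + 2 ≤ n) : Fc (twoBlock n k true false) = 3 := by
  have hzero (a b : Bool) : twoBlock n k a b 0 = a := by simp [twoBlock, show 0 < k by omega]
  have hbound (a b : Bool) : twoBlock n k a b k = b := by
    rw [twoBlock_natCast (by omega), if_neg (lt_irrefl k)]
  let e : {x // cycleMap (twoBlock n k true false) x = x} ≃ {p : Bool × Bool // p.1 ≤ p.2} :=
    { toFun := fun x => ⟨(x.1 0, x.1 k), apply_zero_le_of_fixed (by omega) (by omega) x.2⟩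
      invFun := fun p => ⟨twoBlock n k p.1.1 p.1.2, cycleMap_twoBlock_of_le hk hkn p.2⟩
      left_inv := fun x => Subtype.ext (eq_twoBlock_of_fixed x.2).symm
      right_inv := fun p => by simp [hzero, hbound] }
  rw [Fc, Nat.card_congr e, Nat.card_eq_fintype_card]
  rfl

end TwoBlock

theorem Fc_twoBlock_succ {k : ℕ} (hk : 0 < k) : Fc (twoBlock (k + 1) k true false) = 2 := by
  refine Fc_eq_two_of_fixed_const fun x hx i => ?_
  have hform := eq_twoBlock_of_fixed hx
  have hpred : x ((k - 1 : ℕ) : ZMod (k + 1)) = x 0 := by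
    rw [congrFun hform, twoBlock_natCast (by omega), if_pos (by omega)]
  have hlast : x k = x 0 := by
    have h := congrFun hx k
    have e1 : (k : ZMod (k + 1)) + 1 = 0 := by rw [← Nat.cast_succ, ZMod.natCast_self]
    have e2 : (k : ZMod (k + 1)) - 1 = ((k - 1 : ℕ) : ZMod (k + 1)) := (Nat.cast_pred hk).symm
    simp only [cycleMap, e1, e2, hpred, twoBlock_natCast (lt_add_one k), lt_irrefl, if_false,
      Bool.or_self] at h
    exact h.symm
  rw [congrFun hform i, hlast, twoBlock_self]

theorem cOps_singleton {k : ℕ} (hk : 0 < k) : cOps [k] = fun _ => true := by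
  have : NeZero [k].sum := ⟨by simp; omega⟩
  funext i
  have hi : i.val < k := by simpa using i.val_lt
  simp only [cOps, runOps, List.map_nil, List.append_nil]
  exact List.getD_replicate true hi

theorem cOps_pair (k₁ k₂ : ℕ) : cOps [k₁, k₂] = twoBlock _ k₁ true false := by
  funext i
  simp only [cOps, twoBlock]
  generalize i.val = v
  simp only [runOps, List.map_nil, List.append_nil, List.map_replicate, Bool.not_true]
  by_cases h : v < k₁
  · rw [List.getD_append _ _ _ _ (by simpa), List.getD_replicate true h, if_pos h]
  · rw [List.getD_append_right _ _ _ _ (by simpa using h), if_neg h]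
    simp

/-- closed-chain base cases: `𝔉c([k]) = 2` for `k ≥ 3`,
`𝔉c([k,1]) = 2` for `k ≥ 2`, `𝔉c([k₁,k₂]) = 3` for `k₁, k₂ ≥ 2`. -/
theorem andor_closed_chain_base_cases :
    (∀ k : ℕ, 3 ≤ k → Frc [k] = 2) ∧
    (∀ k : ℕ, 2 ≤ k → Frc [k, 1] = 2) ∧
    (∀ k₁ k₂ : ℕ, 2 ≤ k₁ → 2 ≤ k₂ → Frc [k₁, k₂] = 3) := by
  refine ⟨fun k hk => ?_, fun k hk => ?_, fun k₁ k₂ hk₁ hk₂ => ?_⟩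
  · have : NeZero [k].sum := ⟨by simp; omega⟩
    rw [Frc, cOps_singleton (by omega), Fc_const]
  · rw [Frc, cOps_pair]
    exact Fc_twoBlock_succ (by omega)
  · have : NeZero [k₁, k₂].sum := ⟨by simp; omega⟩
    rw [Frc, cOps_pair]
    exact Fc_twoBlock hk₁ (by simp; omega)
end

section
/- For every even natural number n ≥ 2, the closed-chain AND-OR network whose run-length list consists of n + 2 copies of 1 (i.e., operators strictly alternating around the cycle of length n + 2) satisfies 𝔉c([1,1,…,1]) = 3·a_n − a_{n−2}, where (a_k) is the Padovan sequence (note a_{n−2} ≤ 3·a_n, so the subtraction is exact). -/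
/-- The Padovan sequence: `a 0 = a 1 = a 2 = 1` and `a (k+3) = a (k+1) + a k`. -/
def padovan : ℕ → ℕ
  | 0 => 1
  | 1 => 1
  | 2 => 1
  | n + 3 => padovan (n + 1) + padovan n

/-- Transition relation of the transfer digraph on pairs of booleans. -/
def ARel (p q : Bool × Bool) : Prop := p.2 = (p.1 || q.1) ∧ q.1 = (p.2 && q.2)

instance (p q : Bool × Bool) : Decidable (ARel p q) := by unfold ARel; infer_instance

/-- Paths of length `m` from `a` to `b` in the transfer digraph. -/
def pathsF (m : ℕ) (a b : Bool × Bool) : Finset (Fin (m+1) → Bool × Bool) :=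
  Finset.univ.filter (fun f => f 0 = a ∧ f (Fin.last m) = b ∧
    ∀ i : Fin m, ARel (f i.castSucc) (f i.succ))

lemma pathsF_zero (a b : Bool × Bool) :
    (pathsF 0 a b).card = if a = b then 1 else 0 := by
  by_cases h : a = b
  · subst h
    rw [if_pos rfl]
    have : pathsF 0 a a = {fun _ => a} := by
      ext f
      simp only [pathsF, Finset.mem_filter, Finset.mem_univ, true_and,
        Finset.mem_singleton]
      constructor
      · rintro ⟨h1, -, -⟩
        funext i
        have hi : i = 0 := by ext; omega
        rw [hi, h1]
      · rintro rfl
        exact ⟨rfl, rfl, fun i => i.elim0⟩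
    rw [this, Finset.card_singleton]
  · rw [if_neg h, Finset.card_eq_zero]
    ext f
    simp only [pathsF, Finset.mem_filter, Finset.mem_univ, true_and,
      Finset.notMem_empty, iff_false]
    rintro ⟨h1, h2, -⟩
    exact h (h1 ▸ h2 ▸ rfl)

lemma pathsF_succ (m : ℕ) (a b : Bool × Bool) :
    (pathsF (m+1) a b).card
      = ∑ c : Bool × Bool, if ARel a c then (pathsF m c b).card else 0 := by
  rw [Finset.card_eq_sum_card_fiberwise (f := fun f => f 1) (t := Finset.univ)
    (fun f _ => Finset.mem_univ _)]
  refine Finset.sum_congr rfl (fun c _ => ?_)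
  by_cases hc : ARel a c
  · rw [if_pos hc]
    refine Finset.card_bij' (fun f _ => Fin.tail f) (fun g _ => Fin.cons a g)
      ?_ ?_ ?_ ?_
    · intro f hf
      simp only [pathsF, Finset.mem_filter, Finset.mem_univ, true_and] at hf ⊢
      obtain ⟨⟨h0, hl, hR⟩, h1⟩ := hf
      refine ⟨h1, ?_, fun i => ?_⟩
      · show f (Fin.succ (Fin.last m)) = b
        rw [Fin.succ_last]
        exact hl
      · show ARel (f (Fin.succ i.castSucc)) (f (Fin.succ i.succ))
        rw [Fin.succ_castSucc]
        exact hR i.succ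
    · intro g hg
      simp only [pathsF, Finset.mem_filter, Finset.mem_univ, true_and] at hg ⊢
      obtain ⟨h0, hl, hR⟩ := hg
      refine ⟨⟨Fin.cons_zero _ _, ?_, fun i => ?_⟩, ?_⟩
      · have : Fin.last (m+1) = Fin.succ (Fin.last m) := by
          rw [Fin.succ_last]
        rw [this, Fin.cons_succ]
        exact hl
      · induction i using Fin.cases with
        | zero =>
          have e1 : Fin.castSucc (0 : Fin (m+1)) = 0 := rfl
          have e2 : Fin.succ (0 : Fin (m+1)) = 1 := rfl
          rw [e1, e2, Fin.cons_zero, show (1 : Fin (m+2)) = Fin.succ 0 from rfl,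
            Fin.cons_succ, h0]
          exact hc
        | succ i =>
          rw [← Fin.succ_castSucc, Fin.cons_succ, Fin.cons_succ]
          exact hR i
      · rw [show (1 : Fin (m+2)) = Fin.succ 0 from rfl, Fin.cons_succ]
        exact h0
    · intro f hf
      simp only [pathsF, Finset.mem_filter, Finset.mem_univ, true_and] at hf
      have h := Fin.cons_self_tail f
      rw [hf.1.1] at h
      exact h
    · intro g _
      simp
  · rw [if_neg hc, Finset.card_eq_zero]
    ext f
    simp only [pathsF, Finset.mem_filter, Finset.mem_univ, true_and,
      Finset.notMem_empty, iff_false]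
    rintro ⟨⟨h0, -, hR⟩, h1⟩
    have h := hR 0
    rw [show Fin.castSucc (0 : Fin (m+1)) = 0 from rfl, h0,
      show Fin.succ (0 : Fin (m+1)) = 1 from rfl, h1] at h
    exact hc h

section ClosedForms

local notation "s00" => ((false, false) : Bool × Bool)
local notation "s01" => ((false, true) : Bool × Bool)
local notation "s10" => ((true, false) : Bool × Bool)
local notation "s11" => ((true, true) : Bool × Bool)

lemma rec00 (m : ℕ) (b : Bool × Bool) :
    (pathsF (m+1) s00 b).card = (pathsF m s00 b).card + (pathsF m s01 b).card := by
  rw [pathsF_succ]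
  rw [Fintype.sum_prod_type]
  simp only [Fintype.sum_bool]
  norm_num [ARel]
  omega

lemma rec01 (m : ℕ) (b : Bool × Bool) :
    (pathsF (m+1) s01 b).card = (pathsF m s11 b).card := by
  rw [pathsF_succ, Fintype.sum_prod_type]
  simp only [Fintype.sum_bool]
  norm_num [ARel]

lemma rec10 (m : ℕ) (b : Bool × Bool) :
    (pathsF (m+1) s10 b).card = 0 := by
  rw [pathsF_succ, Fintype.sum_prod_type]
  simp only [Fintype.sum_bool]
  norm_num [ARel]

lemma rec11 (m : ℕ) (b : Bool × Bool) :
    (pathsF (m+1) s11 b).card = (pathsF m s00 b).card + (pathsF m s11 b).card := by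
  rw [pathsF_succ, Fintype.sum_prod_type]
  simp only [Fintype.sum_bool]
  norm_num [ARel]
  omega

end ClosedForms

section Tables

local notation "s00" => ((false, false) : Bool × Bool)
local notation "s01" => ((false, true) : Bool × Bool)
local notation "s10" => ((true, false) : Bool × Bool)
local notation "s11" => ((true, true) : Bool × Bool)

lemma base3 :
    ((pathsF 3 s00 s00).card = 2 ∧ (pathsF 3 s01 s00).card = 2 ∧ (pathsF 3 s11 s00).card = 3) ∧
    ((pathsF 3 s00 s01).card = 1 ∧ (pathsF 3 s01 s01).card = 1 ∧ (pathsF 3 s11 s01).card = 2) ∧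
    ((pathsF 3 s00 s11).card = 2 ∧ (pathsF 3 s01 s11).card = 1 ∧ (pathsF 3 s11 s11).card = 2) := by
  rw [show (3:ℕ) = 2+1 from rfl]
  simp only [rec00, rec01, rec10, rec11, pathsF_zero]
  norm_num

lemma closedForm (j : ℕ) :
    ((pathsF (j+3) s00 s00).card = padovan (2*j+4) ∧
     (pathsF (j+3) s01 s00).card = padovan (2*j+3) ∧
     (pathsF (j+3) s11 s00).card = padovan (2*j+5)) ∧
    ((pathsF (j+3) s00 s01).card = padovan (2*j+2) ∧
     (pathsF (j+3) s01 s01).card = padovan (2*j+1) ∧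
     (pathsF (j+3) s11 s01).card = padovan (2*j+3)) ∧
    ((pathsF (j+3) s00 s11).card = padovan (2*j+3) ∧
     (pathsF (j+3) s01 s11).card = padovan (2*j+2) ∧
     (pathsF (j+3) s11 s11).card = padovan (2*j+4)) := by
  induction j with
  | zero =>
    have h := base3
    norm_num [show padovan 4 = 2 from rfl, show padovan 3 = 2 from rfl,
      show padovan 5 = 3 from rfl, show padovan 2 = 1 from rfl,
      show padovan 1 = 1 from rfl]
    exact h
  | succ j ih =>
    obtain ⟨⟨a1, a2, a3⟩, ⟨b1, b2, b3⟩, ⟨c1, c2, c3⟩⟩ := ih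
    have e : j + 1 + 3 = (j+3) + 1 := by omega
    rw [e]
    have p1 : padovan (2*(j+1)+1) = padovan (2*j+3) := by congr 1
    have p2 : padovan (2*(j+1)+2) = padovan (2*j+2) + padovan (2*j+1) := by
      rw [show 2*(j+1)+2 = (2*j+1)+3 by ring, padovan]
    have p3 : padovan (2*(j+1)+3) = padovan (2*j+3) + padovan (2*j+2) := by
      rw [show 2*(j+1)+3 = (2*j+2)+3 by ring, padovan]
    have p4 : padovan (2*(j+1)+4) = padovan (2*j+4) + padovan (2*j+3) := by
      rw [show 2*(j+1)+4 = (2*j+3)+3 by ring, padovan]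
    have p5 : padovan (2*(j+1)+5) = padovan (2*j+5) + padovan (2*j+4) := by
      rw [show 2*(j+1)+5 = (2*j+4)+3 by ring, padovan]
    refine ⟨⟨?_, ?_, ?_⟩, ⟨?_, ?_, ?_⟩, ⟨?_, ?_, ?_⟩⟩
    · rw [rec00, a1, a2, p4]
    · rw [rec01, a3, p3]
      rw [show 2*j+5 = (2*j+2)+3 by ring, padovan]
    · rw [rec11, a1, a3, p5]
      omega
    · rw [rec00, b1, b2, p2]
    · rw [rec01, b3, p1]
    · rw [rec11, b1, b3, p3]
      omega
    · rw [rec00, c1, c2, p3]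
    · rw [rec01, c3, p2]
      rw [show 2*j+4 = (2*j+1)+3 by ring, padovan]
    · rw [rec11, c1, c3, p4]
      omega

lemma trace_two : ∑ a : Bool × Bool, (pathsF 2 a a).card = 2 := by
  rw [Fintype.sum_prod_type]
  simp only [Fintype.sum_bool]
  rw [show (2:ℕ) = 1+1 from rfl]
  simp only [rec00, rec01, rec10, rec11, pathsF_zero]
  norm_num

lemma trace_big (j : ℕ) :
    ∑ a : Bool × Bool, (pathsF (j+3) a a).card
      = 2 * padovan (2*j+4) + padovan (2*j+1) := by
  rw [Fintype.sum_prod_type]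
  simp only [Fintype.sum_bool]
  obtain ⟨⟨a1, -, -⟩, ⟨-, b2, -⟩, ⟨-, -, c3⟩⟩ := closedForm j
  have h10 : (pathsF (j+3) s10 s10).card = 0 := by
    rw [show j+3 = (j+2)+1 from rfl, rec10]
  rw [a1, b2, c3, h10]
  ring

end Tables

section Bij

/-- Embedding `ZMod k → ZMod (2k)`, `j ↦ 2j`. -/
def emb (k : ℕ) (j : ZMod k) : ZMod (2*k) := ((2 * j.val : ℕ) : ZMod (2*k))

variable {k : ℕ}

lemma emb_val [NeZero k] (j : ZMod k) : (emb k j).val = 2 * j.val := by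
  haveI : NeZero (2*k) := ⟨by have := NeZero.pos k; omega⟩
  exact ZMod.val_cast_of_lt (by have := ZMod.val_lt j; omega)

lemma emb_add_one_val [NeZero k] (j : ZMod k) : (emb k j + 1).val = 2 * j.val + 1 := by
  haveI : NeZero (2*k) := ⟨by have := NeZero.pos k; omega⟩
  have h : emb k j + 1 = ((2 * j.val + 1 : ℕ) : ZMod (2*k)) := by
    unfold emb; push_cast; ring
  rw [h]
  exact ZMod.val_cast_of_lt (by have := ZMod.val_lt j; omega)

lemma emb_succ (hk : 2 ≤ k) (j : ZMod k) : emb k (j+1) = emb k j + 1 + 1 := by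
  haveI : NeZero k := ⟨by omega⟩
  haveI : Fact (1 < k) := ⟨by omega⟩
  have hval : (j + 1).val = (j.val + 1) % k := by
    rw [ZMod.val_add, ZMod.val_one]
  have key : ((2 * ((j.val + 1) % k) : ℕ) : ZMod (2*k))
      = ((2 * (j.val + 1) : ℕ) : ZMod (2*k)) := by
    have h2 : 2 * (j.val + 1) = 2 * ((j.val + 1) % k) + (2*k) * ((j.val + 1) / k) := by
      calc 2 * (j.val + 1) = 2 * ((j.val + 1) % k + k * ((j.val + 1) / k)) := by
            rw [Nat.mod_add_div]
        _ = 2 * ((j.val + 1) % k) + (2*k) * ((j.val + 1) / k) := by ring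
    rw [h2, Nat.cast_add, Nat.cast_mul (2*k), ZMod.natCast_self, zero_mul, add_zero]
  show ((2 * (j+1).val : ℕ) : ZMod (2*k)) = _
  rw [hval, key]
  unfold emb
  push_cast
  ring

/-- From a cyclic configuration to a walk in the transfer digraph. -/
def toS (k : ℕ) (x : ZMod (2*k) → Bool) : ZMod k → Bool × Bool :=
  fun j => (x (emb k j), x (emb k j + 1))

/-- From a walk back to a cyclic configuration. -/
def toX (k : ℕ) (s : ZMod k → Bool × Bool) : ZMod (2*k) → Bool :=
  fun i => if i.val % 2 = 0 then (s ((i.val / 2 : ℕ) : ZMod k)).1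
           else (s ((i.val / 2 : ℕ) : ZMod k)).2

lemma toS_toX (hk : 2 ≤ k) (s : ZMod k → Bool × Bool) : toS k (toX k s) = s := by
  haveI : NeZero k := ⟨by omega⟩
  haveI : NeZero (2*k) := ⟨by omega⟩
  funext j
  show (toX k s (emb k j), toX k s (emb k j + 1)) = s j
  have h1 : toX k s (emb k j) = (s j).1 := by
    unfold toX
    rw [emb_val j]
    have hm : 2 * j.val % 2 = 0 := by omega
    rw [if_pos hm, show 2 * j.val / 2 = j.val by omega, ZMod.natCast_rightInverse j]
  have h2 : toX k s (emb k j + 1) = (s j).2 := by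
    unfold toX
    rw [emb_add_one_val j]
    have hm : ¬((2 * j.val + 1) % 2 = 0) := by omega
    rw [if_neg hm, show (2 * j.val + 1) / 2 = j.val by omega,
      ZMod.natCast_rightInverse j]
  rw [h1, h2]

lemma toX_toS (hk : 2 ≤ k) (x : ZMod (2*k) → Bool) : toX k (toS k x) = x := by
  haveI : NeZero k := ⟨by omega⟩
  haveI : NeZero (2*k) := ⟨by omega⟩
  funext i
  have hlt : i.val < 2*k := ZMod.val_lt i
  have hlt2 : i.val / 2 < k := by omega
  have hval : ((i.val / 2 : ℕ) : ZMod k).val = i.val / 2 := ZMod.val_cast_of_lt hlt2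
  by_cases hp : i.val % 2 = 0
  · have : toX k (toS k x) i = x (emb k ((i.val / 2 : ℕ) : ZMod k)) := by
      unfold toX toS
      rw [if_pos hp]
    rw [this]
    congr 1
    unfold emb
    rw [hval, show 2 * (i.val / 2) = i.val by omega]
    exact ZMod.natCast_rightInverse i
  · have : toX k (toS k x) i = x (emb k ((i.val / 2 : ℕ) : ZMod k) + 1) := by
      unfold toX toS
      rw [if_neg hp]
    rw [this]
    congr 1
    have : emb k ((i.val / 2 : ℕ) : ZMod k) + 1
        = ((2 * (i.val / 2) + 1 : ℕ) : ZMod (2*k)) := by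
      unfold emb; rw [hval]; push_cast; ring
    rw [this, show 2 * (i.val / 2) + 1 = i.val by omega]
    exact ZMod.natCast_rightInverse i

lemma fixediff (hk : 2 ≤ k) (ops : ZMod (2*k) → Bool)
    (hops : ∀ i : ZMod (2*k), ops i = decide (i.val % 2 = 0))
    (x : ZMod (2*k) → Bool) :
    cycleMap ops x = x ↔ ∀ j : ZMod k, ARel (toS k x j) (toS k x (j+1)) := by
  haveI : NeZero k := ⟨by omega⟩
  haveI : NeZero (2*k) := ⟨by omega⟩
  constructor
  · intro h j
    have hfun := congrFun h
    constructor
    · -- x (emb j + 1) = x (emb j) || x (emb (j+1))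
      have h1 := hfun (emb k j + 1)
      have hop : ops (emb k j + 1) = false := by
        rw [hops]
        simp only [emb_add_one_val j, decide_eq_false_iff_not]
        omega
      unfold cycleMap at h1
      rw [hop] at h1
      simp only [Bool.false_eq_true, if_false] at h1
      show x (emb k j + 1) = (x (emb k j) || x (emb k (j+1)))
      rw [← h1, add_sub_cancel_right, emb_succ hk j]
    · -- x (emb (j+1)) = x (emb j + 1) && x (emb (j+1) + 1)
      have h2 := hfun (emb k (j+1))
      have hop : ops (emb k (j+1)) = true := by
        rw [hops]
        simp only [emb_val (j+1), decide_eq_true_eq]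
        omega
      unfold cycleMap at h2
      rw [hop] at h2
      simp only [if_true] at h2
      show x (emb k (j+1)) = (x (emb k j + 1) && x (emb k (j+1) + 1))
      rw [← h2]
      congr 1
      rw [emb_succ hk j, add_sub_cancel_right]
  · intro h
    funext i
    have hlt : i.val < 2*k := ZMod.val_lt i
    have hlt2 : i.val / 2 < k := by omega
    have hval : ((i.val / 2 : ℕ) : ZMod k).val = i.val / 2 := ZMod.val_cast_of_lt hlt2
    by_cases hp : i.val % 2 = 0
    · -- AND node
      set j : ZMod k := ((i.val / 2 : ℕ) : ZMod k) - 1 with hj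
      have hj1 : j + 1 = ((i.val / 2 : ℕ) : ZMod k) := by rw [hj]; ring
      have he1 : emb k (j+1) = i := by
        rw [hj1]
        unfold emb
        rw [hval, show 2 * (i.val / 2) = i.val by omega]
        exact ZMod.natCast_rightInverse i
      have he0 : emb k j + 1 = i - 1 := by
        have := emb_succ hk j
        rw [he1] at this
        rw [eq_sub_iff_add_eq, ← this]
      have h2 := (h j).2
      show cycleMap ops x i = x i
      unfold cycleMap
      have hop : ops i = true := by rw [hops]; simp only [decide_eq_true_eq]; omega
      rw [hop, if_pos rfl]
      unfold toS at h2
      rw [he1, he0] at h2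
      exact h2.symm
    · -- OR node
      set j : ZMod k := ((i.val / 2 : ℕ) : ZMod k) with hj
      have he0 : emb k j + 1 = i := by
        have : emb k j + 1 = ((2 * (i.val / 2) + 1 : ℕ) : ZMod (2*k)) := by
          unfold emb; rw [hj, hval]; push_cast; ring
        rw [this, show 2 * (i.val / 2) + 1 = i.val by omega]
        exact ZMod.natCast_rightInverse i
      have hem : emb k j = i - 1 := by rw [eq_sub_iff_add_eq, he0]
      have he1 : emb k (j+1) = i + 1 := by rw [emb_succ hk j, he0]
      have h1 := (h j).1
      show cycleMap ops x i = x i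
      unfold cycleMap
      have hop : ops i = false := by
        rw [hops]; simp only [decide_eq_false_iff_not]; omega
      rw [hop]
      simp only [Bool.false_eq_true, if_false]
      unfold toS at h1
      rw [he0, hem, he1] at h1
      exact h1.symm

end Bij

section Count

variable {k : ℕ}

lemma walk_mem (hk : 2 ≤ k) (s : ZMod k → Bool × Bool)
    (hs : ∀ j : ZMod k, ARel (s j) (s (j+1))) :
    (fun i : Fin (k+1) => s ((i.val : ℕ) : ZMod k)) ∈ pathsF k (s 0) (s 0) := by
  haveI : NeZero k := ⟨by omega⟩
  simp only [pathsF, Finset.mem_filter, Finset.mem_univ, true_and]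
  refine ⟨by norm_num, ?_, fun i => ?_⟩
  · show s ((((Fin.last k).val : ℕ)) : ZMod k) = s 0
    simp [Fin.last, ZMod.natCast_self]
  · have h1 : ((i.castSucc.val : ℕ) : ZMod k) = ((i.val : ℕ) : ZMod k) := rfl
    have h2 : ((i.succ.val : ℕ) : ZMod k) = ((i.val : ℕ) : ZMod k) + 1 := by
      show (((i.val + 1 : ℕ)) : ZMod k) = _
      push_cast
      ring
    show ARel (s ((i.castSucc.val : ℕ) : ZMod k)) (s ((i.succ.val : ℕ) : ZMod k))
    rw [h1, h2]
    exact hs _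

lemma restrict_walk [NeZero k] (hk : 2 ≤ k) (a : Bool × Bool) (f : Fin (k+1) → Bool × Bool)
    (hf : f ∈ pathsF k a a) :
    ∀ j : ZMod k, ARel ((fun j : ZMod k => f ⟨j.val, by have := ZMod.val_lt j; omega⟩) j)
      ((fun j : ZMod k => f ⟨j.val, by have := ZMod.val_lt j; omega⟩) (j+1)) := by
  haveI : Fact (1 < k) := ⟨by omega⟩
  simp only [pathsF, Finset.mem_filter, Finset.mem_univ, true_and] at hf
  obtain ⟨h0, hl, hR⟩ := hf
  intro j
  have hjlt : j.val < k := ZMod.val_lt j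
  have hval : (j + 1).val = (j.val + 1) % k := by rw [ZMod.val_add, ZMod.val_one]
  by_cases hc : j.val + 1 < k
  · have hv : (j + 1).val = j.val + 1 := by rw [hval, Nat.mod_eq_of_lt hc]
    have := hR ⟨j.val, hjlt⟩
    have e1 : (⟨j.val, hjlt⟩ : Fin k).castSucc = ⟨j.val, by omega⟩ := rfl
    have e2 : (⟨j.val, hjlt⟩ : Fin k).succ = ⟨j.val + 1, by omega⟩ := rfl
    rw [e1, e2] at this
    simp only []
    convert this using 3
  · have hk1 : j.val + 1 = k := by omega
    have hv : (j + 1).val = 0 := by rw [hval, hk1, Nat.mod_self]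
    have := hR ⟨j.val, hjlt⟩
    have e1 : (⟨j.val, hjlt⟩ : Fin k).castSucc = ⟨j.val, by omega⟩ := rfl
    have e2 : (⟨j.val, hjlt⟩ : Fin k).succ = ⟨j.val + 1, by omega⟩ := rfl
    rw [e1, e2] at this
    simp only []
    have hfl : f ⟨j.val + 1, by omega⟩ = a := by
      have : (⟨j.val + 1, by omega⟩ : Fin (k+1)) = Fin.last k := by
        ext; simp [hk1]
      rw [this]; exact hl
    have hf0 : f ⟨(j+1).val, by have := ZMod.val_lt (j+1); omega⟩ = a := by
      have : (⟨(j+1).val, by have := ZMod.val_lt (j+1); omega⟩ : Fin (k+1)) = 0 := by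
        ext; simp [hv]
      rw [this]; exact h0
    rw [hf0, ← hfl]
    exact this

end Count

lemma sigma_pathsF_ext {k : ℕ} {a b : Bool × Bool} {f g : Fin (k+1) → Bool × Bool}
    (hab : a = b) (hfg : f = g) (hf : f ∈ pathsF k a a) (hg : g ∈ pathsF k b b) :
    (⟨a, ⟨f, hf⟩⟩ : Σ c : Bool × Bool, {h // h ∈ pathsF k c c}) = ⟨b, ⟨g, hg⟩⟩ := by
  subst hab; subst hfg; rfl

lemma keyCount (k : ℕ) (hk : 2 ≤ k) (N : ℕ) (hN : N = 2*k) (ops : ZMod N → Bool)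
    (hops : ∀ i : ZMod N, ops i = decide (i.val % 2 = 0)) :
    Fc ops = ∑ a : Bool × Bool, (pathsF k a a).card := by
  subst hN
  haveI : NeZero k := ⟨by omega⟩
  haveI : NeZero (2*k) := ⟨by omega⟩
  unfold Fc
  have E1 : {x : ZMod (2*k) → Bool // cycleMap ops x = x}
      ≃ {s : ZMod k → Bool × Bool // ∀ j : ZMod k, ARel (s j) (s (j+1))} :=
    { toFun := fun x => ⟨toS k x.1, (fixediff hk ops hops x.1).mp x.2⟩
      invFun := fun s => ⟨toX k s.1, by
        rw [fixediff hk ops hops]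
        rw [toS_toX hk s.1]
        exact s.2⟩
      left_inv := fun x => Subtype.ext (toX_toS hk x.1)
      right_inv := fun s => Subtype.ext (toS_toX hk s.1) }
  rw [Nat.card_congr E1]
  have E2 : {s : ZMod k → Bool × Bool // ∀ j : ZMod k, ARel (s j) (s (j+1))}
      ≃ (Σ a : Bool × Bool, {f // f ∈ pathsF k a a}) :=
    { toFun := fun s => ⟨s.1 0,
        ⟨fun i : Fin (k+1) => s.1 ((i.val : ℕ) : ZMod k), walk_mem hk s.1 s.2⟩⟩
      invFun := fun p => ⟨fun j : ZMod k => p.2.1 ⟨j.val, by have := ZMod.val_lt j; omega⟩,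
        restrict_walk hk p.1 p.2.1 p.2.2⟩
      left_inv := by
        rintro ⟨s, hs⟩
        apply Subtype.ext
        funext j
        show s ((((⟨j.val, _⟩ : Fin (k+1)).val : ℕ)) : ZMod k) = s j
        simp only []
        congr 1
        exact ZMod.natCast_rightInverse j
      right_inv := by
        rintro ⟨a, f, hf⟩
        have hmem := hf
        simp only [pathsF, Finset.mem_filter, Finset.mem_univ, true_and] at hmem
        obtain ⟨h0, hl, -⟩ := hmem
        apply sigma_pathsF_ext
        · show (fun j : ZMod k => f ⟨j.val, by have := ZMod.val_lt j; omega⟩) (0 : ZMod k) = a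
          simp only []
          have e : (⟨(0 : ZMod k).val, by have := ZMod.val_lt (0 : ZMod k); omega⟩ : Fin (k+1)) = 0 := by
            ext; simp
          rw [e]
          exact h0
        · funext i
          show f ⟨(((i.val : ℕ) : ZMod k)).val, _⟩ = f i
          by_cases hik : i.val < k
          · congr 1
            ext
            simp [ZMod.val_cast_of_lt hik]
          · have hik' : i.val = k := by have := i.isLt; omega
            have hz : (((i.val : ℕ) : ZMod k)).val = 0 := by
              rw [hik', ZMod.natCast_self, ZMod.val_zero]
            have e0 : (⟨(((i.val : ℕ) : ZMod k)).val,
                by have := ZMod.val_lt ((i.val : ℕ) : ZMod k); omega⟩ : Fin (k+1)) = 0 := by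
              ext; simp [hz]
            rw [e0, h0]
            have el : i = Fin.last k := by ext; simp [hik']
            rw [el, hl] }
  rw [Nat.card_congr E2, Nat.card_eq_fintype_card, Fintype.card_sigma]
  refine Finset.sum_congr rfl (fun a _ => ?_)
  rw [Fintype.card_coe]

lemma runOps_length_s17 (m : ℕ) : (runOps (List.replicate m 1)).length = m := by
  induction m with
  | zero => rfl
  | succ m ih =>
    rw [List.replicate_succ]
    show (List.replicate 1 true ++ (runOps (List.replicate m 1)).map (fun b => !b)).length = m + 1
    simp [ih]

lemma runOps_getD (m v : ℕ) (h : v < m) :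
    (runOps (List.replicate m 1)).getD v false = decide (v % 2 = 0) := by
  induction m generalizing v with
  | zero => omega
  | succ m ih =>
    rw [List.replicate_succ]
    rw [show runOps (1 :: List.replicate m 1)
        = true :: (runOps (List.replicate m 1)).map (fun b => !b) from rfl]
    cases v with
    | zero => rfl
    | succ v =>
      have hv : v < m := by omega
      have hlen : v < ((runOps (List.replicate m 1)).map (fun b => !b)).length := by
        rw [List.length_map, runOps_length_s17]; exact hv
      rw [List.getD_cons_succ, List.getD_eq_getElem _ _ hlen, List.getElem_map]
      have hind := ih v hv
      rw [List.getD_eq_getElem _ _ (by rw [runOps_length_s17]; exact hv)] at hind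
      rw [hind]
      by_cases hp : v % 2 = 0
      · simp [hp, show ¬((v+1) % 2 = 0) by omega]
      · simp [hp, show (v+1) % 2 = 0 by omega]

theorem andor_closed_chain_alternating_count' (n : ℕ) (hn : 2 ≤ n)
    (hne : Even n) :
    Frc (List.replicate (n + 2) 1) = 3 * padovan n - padovan (n - 2) ∧
    padovan (n - 2) ≤ 3 * padovan n := by
  obtain ⟨m, hm⟩ := hne
  have hm1 : 1 ≤ m := by omega
  have hsum : (List.replicate (n + 2) 1).sum = n + 2 := by simp
  haveI : NeZero ((List.replicate (n + 2) 1).sum) := ⟨by omega⟩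
  have hops : ∀ i : ZMod ((List.replicate (n + 2) 1).sum),
      cOps (List.replicate (n + 2) 1) i = decide (i.val % 2 = 0) := by
    intro i
    have hv := ZMod.val_lt i
    show (runOps (List.replicate (n + 2) 1)).getD i.val false = _
    exact runOps_getD (n+2) i.val (by omega)
  unfold Frc
  rw [keyCount (m+1) (by omega) _ (by omega) _ hops]
  rcases Nat.lt_or_ge m 2 with hm2 | hm2
  · -- m = 1, n = 2
    have hm' : m = 1 := by omega
    have hn2 : n = 2 := by omega
    subst hm'
    rw [show (1:ℕ)+1 = 2 from rfl, trace_two, hn2]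
    norm_num
    decide
  · -- m ≥ 2
    obtain ⟨j, hj⟩ : ∃ j, m = j + 2 := ⟨m - 2, by omega⟩
    subst hj
    rw [show j+2+1 = j+3 from rfl, trace_big j]
    have hrec : padovan (2*j+4) = padovan (2*j+2) + padovan (2*j+1) := by
      rw [show 2*j+4 = (2*j+1)+3 by ring, padovan]
    have hn4 : n = 2*j+4 := by omega
    rw [hn4, show 2*j+4-2 = 2*j+2 by omega]
    omega

/-- the strictly alternating closed chain of even length
`n + 2 ≥ 4` has `3·a_n - a_{n-2}` fixed points, `a` the Padovan sequence
(the subtraction is exact). -/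
theorem andor_closed_chain_alternating_count (n : ℕ) (hn : 2 ≤ n)
    (hne : Even n) :
    Frc (List.replicate (n + 2) 1) = 3 * padovan n - padovan (n - 2) ∧
    padovan (n - 2) ≤ 3 * padovan n := by
  exact andor_closed_chain_alternating_count' n hn hne
end
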